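/- arXiv:1512.05269 — 2 statements merged into one kernel-verified Lean document; each statement's English description precedes it below -/
import Mathlib

section
/- Let t > 0, and let c, L ∈ ℝ and α ≤ β be real numbers. Then ‖∫_α^β e^{i(tμ² + cμ)}·(e^{iμL} + 1)/(e^{iμL} − 3) dμ‖ ≤ 4√2/√t. -/
/-!
Completing the square and rescaling by `√t` turn `∫ exp (i (t μ² + c μ))` over any interval into
`(√t)⁻¹` times a Fresnel integral `∫ exp (i x²)` over some interval. A Fresnel integral over any
interval is at most `4`: on `[0, 1]` the integrand has modulus one, and on `[a, b] ⊆ [1, ∞)` one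
integration by parts against `x⁻¹` gives the bound `a⁻¹`. Since `|e^{iμL}| = 1`, the Neumann series
`(z + 1) / (z - 3) = -∑ₙ (z + 1) zⁿ / 3ⁿ⁺¹` expands the integral into integrals of the same
quadratic-phase type, with `c` replaced by `c + nL`, and its coefficients have absolute sum `1`.
-/

open Complex intervalIntegral MeasureTheory

theorem norm_integral_cexp_I_mul_sq_le_inv {a b : ℝ} (ha : 0 < a) (hab : a ≤ b) :
    ‖∫ x in a..b, cexp (I * x ^ 2)‖ ≤ a⁻¹ := by
  have hpos : ∀ x ∈ Set.uIcc a b, 0 < x := fun x hx =>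
    ha.trans_le (Set.uIcc_of_le hab ▸ hx).1
  have hinv : ∀ x ∈ Set.uIcc a b, HasDerivAt (fun x : ℝ => ((x⁻¹ : ℝ) : ℂ))
      ((-(x ^ 2)⁻¹ : ℝ) : ℂ) x := fun x hx =>
    (hasDerivAt_inv (hpos x hx).ne').ofReal_comp
  have hprimitive : ∀ x ∈ Set.uIcc a b, HasDerivAt (fun x : ℝ => cexp (I * x ^ 2) / (2 * I))
      (cexp (I * x ^ 2) * x) x := by
    intro x _
    have := (((hasDerivAt_pow 2 (x : ℂ)).const_mul I).cexp.div_const (2 * I)).comp_ofReal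
    convert this using 1
    field_simp
    push_cast
    ring
  have hinv_sq : ContinuousOn (fun x : ℝ => (x ^ 2)⁻¹) (Set.uIcc a b) :=
    (continuousOn_pow 2).inv₀ fun x hx => (pow_pos (hpos x hx) 2).ne'
  have hibp := integral_mul_deriv_eq_deriv_mul hinv hprimitive
    (continuous_ofReal.comp_continuousOn hinv_sq.neg).intervalIntegrable
    (Continuous.intervalIntegrable (by fun_prop) _ _)
  have hlhs : ∫ x in a..b, cexp (I * x ^ 2) =
      ∫ x in a..b, ((x⁻¹ : ℝ) : ℂ) * (cexp (I * x ^ 2) * x) :=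
    integral_congr fun x hx => by
      have : (x : ℂ) ≠ 0 := ofReal_ne_zero.mpr (hpos x hx).ne'
      push_cast
      field_simp
  have hboundary : ∀ x, 0 < x → ‖((x⁻¹ : ℝ) : ℂ) * (cexp (I * x ^ 2) / (2 * I))‖ = x⁻¹ / 2 := by
    intro x hx
    rw [norm_mul, norm_div, ← ofReal_pow, norm_exp_I_mul_ofReal]
    simp [abs_of_pos hx, div_eq_mul_inv]
  have hrest : ‖∫ x in a..b, ((-(x ^ 2)⁻¹ : ℝ) : ℂ) * (cexp (I * x ^ 2) / (2 * I))‖ ≤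
      (a⁻¹ - b⁻¹) / 2 := by
    have hftc : ∫ x in a..b, (x ^ 2)⁻¹ / 2 = (a⁻¹ - b⁻¹) / 2 := by
      rw [integral_eq_sub_of_hasDerivAt (f := fun x => -x⁻¹ / 2)]
      · ring
      · intro x hx
        simpa using ((hasDerivAt_inv (hpos x hx).ne').neg.div_const 2)
      · exact (hinv_sq.div_const 2).intervalIntegrable
    rw [← hftc]
    refine norm_integral_le_of_norm_le hab (Filter.Eventually.of_forall fun x hx => ?_)
      (hinv_sq.div_const 2).intervalIntegrable
    rw [norm_mul, norm_div, ← ofReal_pow, norm_exp_I_mul_ofReal]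
    simp [div_eq_mul_inv]
  calc ‖∫ x in a..b, cexp (I * x ^ 2)‖ ≤ b⁻¹ / 2 + a⁻¹ / 2 + (a⁻¹ - b⁻¹) / 2 := by
        rw [hlhs, hibp, ← hboundary b (ha.trans_le hab), ← hboundary a ha]
        exact (norm_sub_le _ _).trans (add_le_add (norm_sub_le _ _) hrest)
    _ = a⁻¹ := by ring

theorem norm_integral_cexp_I_mul_sq_le_abs (a b : ℝ) :
    ‖∫ x in a..b, cexp (I * x ^ 2)‖ ≤ |b - a| := by
  simpa using norm_integral_le_of_norm_le_const (C := 1) fun x _ =>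
    (norm_exp_I_mul_ofReal (x ^ 2)).le.trans_eq' (by push_cast; rfl)

theorem norm_integral_zero_cexp_I_mul_sq_le_two (b : ℝ) :
    ‖∫ x in (0)..b, cexp (I * x ^ 2)‖ ≤ 2 := by
  wlog hb : 0 ≤ b generalizing b
  · have hreflect : ∫ x in (0)..b, cexp (I * x ^ 2) = -∫ x in (0)..(-b), cexp (I * x ^ 2) := by
      rw [integral_symm, ← neg_zero, ← integral_comp_neg (fun x : ℝ => cexp (I * x ^ 2))]
      simp
    rw [hreflect, norm_neg]
    exact this (-b) (by linarith)
  rcases le_or_gt b 1 with hb1 | hb1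
  · calc _ ≤ |b - 0| := norm_integral_cexp_I_mul_sq_le_abs 0 b
      _ ≤ 2 := by rw [sub_zero, abs_of_nonneg hb]; linarith
  · have hint : ∀ a b : ℝ, IntervalIntegrable (fun x : ℝ => cexp (I * x ^ 2)) volume a b :=
      fun a b => Continuous.intervalIntegrable (by fun_prop) a b
    rw [← integral_add_adjacent_intervals (hint 0 1) (hint 1 b)]
    calc _ ≤ |1 - 0| + (1 : ℝ)⁻¹ := (norm_add_le _ _).trans <| add_le_add
          (norm_integral_cexp_I_mul_sq_le_abs 0 1)
          (norm_integral_cexp_I_mul_sq_le_inv one_pos hb1.le)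
      _ = 2 := by norm_num

theorem norm_integral_cexp_I_mul_sq_le_four (a b : ℝ) :
    ‖∫ x in a..b, cexp (I * x ^ 2)‖ ≤ 4 := by
  have hint : ∀ b : ℝ, IntervalIntegrable (fun x : ℝ => cexp (I * x ^ 2)) volume 0 b :=
    fun b => Continuous.intervalIntegrable (by fun_prop) 0 b
  rw [← integral_interval_sub_left (hint b) (hint a)]
  linarith [norm_sub_le (∫ x in (0)..b, cexp (I * x ^ 2)) (∫ x in (0)..a, cexp (I * x ^ 2)),
    norm_integral_zero_cexp_I_mul_sq_le_two a, norm_integral_zero_cexp_I_mul_sq_le_two b]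

theorem norm_integral_cexp_I_mul_quadratic_le {t : ℝ} (ht : 0 < t) (c α β : ℝ) :
    ‖∫ μ in α..β, cexp (I * (t * μ ^ 2 + c * μ))‖ ≤ 4 / √t := by
  set s := √t
  have hs : 0 < s := Real.sqrt_pos.mpr ht
  have hcomplete : ∀ μ : ℝ, cexp (I * (t * μ ^ 2 + c * μ)) =
      cexp (I * ((s * μ + c / (2 * s) : ℝ) : ℂ) ^ 2) *
        cexp (I * ((-(c / (2 * s)) ^ 2 : ℝ) : ℂ)) := by
    intro μ
    rw [← exp_add]
    congr 1
    have hs2 : ((s : ℝ) : ℂ) ^ 2 = t := by rw [← ofReal_pow, Real.sq_sqrt ht.le]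
    have hs0 : (s : ℂ) ≠ 0 := ofReal_ne_zero.mpr hs.ne'
    push_cast
    field_simp
    rw [← hs2]
    ring
  simp_rw [hcomplete]
  rw [intervalIntegral.integral_mul_const,
    integral_comp_mul_add (fun x : ℝ => cexp (I * x ^ 2)) hs.ne', norm_mul, norm_smul,
    norm_exp_I_mul_ofReal, mul_one, Real.norm_of_nonneg (inv_nonneg.mpr hs.le)]
  exact mul_le_mul_of_nonneg_left (norm_integral_cexp_I_mul_sq_le_four _ _) (inv_nonneg.mpr hs.le)
    |>.trans_eq (by ring)

theorem hasSum_neumann_div_sub_three {z : ℂ} (hz : ‖z‖ < 3) :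
    HasSum (fun n : ℕ => -((z + 1) / 3) * (z / 3) ^ n) ((z + 1) / (z - 3)) := by
  have hz3 : ‖z / 3‖ < 1 := by
    rw [norm_div, div_lt_one (by norm_num)]
    simpa using hz
  have hsum := (hasSum_geometric_of_norm_lt_one hz3).mul_left (-((z + 1) / 3))
  rwa [show -((z + 1) / 3) * (1 - z / 3)⁻¹ = (z + 1) / (z - 3) by
    rw [show (1 : ℂ) - z / 3 = -(z - 3) / 3 by ring, inv_div]
    field_simp] at hsum

theorem norm_integral_mul_div_sub_three_le {f g : ℝ → ℂ} {a b M : ℝ}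
    (hf : IntervalIntegrable f volume a b) (hg : Continuous g) (hg1 : ∀ x, ‖g x‖ ≤ 1)
    (hM : ∀ n : ℕ, ‖∫ x in a..b, f x * g x ^ n‖ ≤ M) :
    ‖∫ x in a..b, f x * ((g x + 1) / (g x - 3))‖ ≤ M := by
  have hweights : HasSum (fun n : ℕ => 2 / 3 * (1 / 3 : ℝ) ^ n) 1 := by
    have h := (hasSum_geometric_of_lt_one (r := (1 / 3 : ℝ)) (by norm_num) (by norm_num)).mul_left
      (2 / 3)
    rwa [show (2 / 3 : ℝ) * (1 - 1 / 3)⁻¹ = 1 by norm_num] at h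
  have hterm_le : ∀ (n : ℕ) x,
      ‖-((g x + 1) / 3) * (g x / 3) ^ n‖ ≤ 2 / 3 * (1 / 3 : ℝ) ^ n := by
    intro n x
    rw [norm_mul, norm_neg, norm_div, norm_pow, norm_div]
    gcongr
    · exact (norm_add_le _ _).trans (by rw [norm_one]; linarith [hg1 x])
    · simp
    · simpa using hg1 x
    · simp
  have hpow : ∀ k : ℕ, IntervalIntegrable (fun x => f x * g x ^ k) volume a b :=
    fun k => hf.mul_continuousOn (hg.pow k).continuousOn
  have hsum : HasSum (fun n : ℕ => ∫ x in a..b, f x * (-((g x + 1) / 3) * (g x / 3) ^ n))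
      (∫ x in a..b, f x * ((g x + 1) / (g x - 3))) := by
    refine hasSum_integral_of_dominated_convergence (fun n x => ‖f x‖ * (2 / 3 * (1 / 3) ^ n))
      (fun n => (hf.mul_continuousOn (by fun_prop)).def'.aestronglyMeasurable)
      (fun n => .of_forall fun x _ => ?_) (.of_forall fun x _ => (hweights.mul_left _).summable)
      ?_ (.of_forall fun x _ => (hasSum_neumann_div_sub_three ?_).mul_left (f x))
    · rw [norm_mul]
      exact mul_le_mul_of_nonneg_left (hterm_le n x) (norm_nonneg _)
    · simp_rw [(hweights.mul_left _).tsum_eq, mul_one]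
      exact hf.norm
    · linarith [hg1 x]
  refine hsum.norm_le_of_bounded (one_mul M ▸ hweights.mul_right M) fun n => ?_
  have hexpand : ∀ x, f x * (-((g x + 1) / 3) * (g x / 3) ^ n) =
      -(1 / 3) ^ (n + 1) * (f x * g x ^ (n + 1) + f x * g x ^ n) := fun x => by ring
  simp_rw [hexpand]
  rw [intervalIntegral.integral_const_mul, integral_add (hpow _) (hpow _), norm_mul, norm_neg,
    norm_pow, norm_div, norm_one]
  calc _ ≤ (1 / ‖(3 : ℂ)‖) ^ (n + 1) * (M + M) := by
        gcongr
        exact (norm_add_le _ _).trans (add_le_add (hM _) (hM _))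
    _ = 2 / 3 * (1 / 3) ^ n * M := by norm_num; ring

theorem stmt_13_general (t : ℝ) (ht : 0 < t) (c L : ℝ) (α β : ℝ) :
    ‖∫ μ in α..β,
        Complex.exp (I * (t * μ ^ 2 + c * μ))
          * (Complex.exp (I * μ * L) + 1) / (Complex.exp (I * μ * L) - 3)‖
      ≤ 4 * Real.sqrt 2 / Real.sqrt t := by
  have hphase : ∀ μ : ℝ, I * μ * L = I * ((μ * L : ℝ) : ℂ) := fun μ => by push_cast; ring
  have hpowers : ∀ n : ℕ, ‖∫ μ in α..β, cexp (I * (t * μ ^ 2 + c * μ)) * cexp (I * μ * L) ^ n‖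
      ≤ 4 / √t := fun n => by
    convert norm_integral_cexp_I_mul_quadratic_le ht (c + n * L) α β using 4 with μ
    rw [← exp_nat_mul, ← exp_add]
    push_cast
    ring_nf
  simp_rw [mul_div_assoc (cexp _)]
  calc _ ≤ 4 / √t := norm_integral_mul_div_sub_three_le (Continuous.intervalIntegrable
          (by fun_prop) _ _) (by fun_prop) (fun μ => by rw [hphase, norm_exp_I_mul_ofReal])
          hpowers
    _ ≤ 4 * √2 / √t := by
        gcongr
        exact le_mul_of_one_le_right (by norm_num) (Real.one_le_sqrt.mpr (by norm_num))

theorem stmt_13 (t : ℝ) (ht : 0 < t) (c L : ℝ) (α β : ℝ) (hαβ : α ≤ β) :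
    ‖∫ μ in α..β,
        Complex.exp (I * (t * μ ^ 2 + c * μ))
          * (Complex.exp (I * μ * L) + 1) / (Complex.exp (I * μ * L) - 3)‖
      ≤ 4 * Real.sqrt 2 / Real.sqrt t :=
  stmt_13_general t ht c L α β
end

section
/- Let t > 0, let L, d, s ∈ ℝ and let α ≤ β be real numbers. Then ‖∫_α^β e^{itμ²}·(e^{iμd} − (1 + 2(e^{iμL}+1)/(e^{iμL}−3))·e^{iμs}) dμ‖ ≤ 16√2/√t. -/
/-!
A single chirp `e^{itμ² + icμ}` has interval integrals bounded by `4/√t`, uniformly in the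
interval and in `c`: completing the square reduces it to `∫ e^{itu²}`, which near the stationary
point `u = 0` is bounded by the length `1/√t` of the range and beyond it by `1/(t · (1/√t))`
after one integration by parts. On the unit circle the coefficient is
`1 + 2(z+1)/(z-3) = 1/3 - (8/9) z/(1 - z/3)`, and expanding `1/(1 - z/3)` as a geometric series
in `z = e^{iμL}` writes the integrand as a combination of chirps whose coefficients have `ℓ¹`
norm `1 + 1/3 + (8/9)·(3/2) = 8/3`. Integrating termwise gives `(8/3)·4/√t ≤ 16√2/√t`.
-/

open Complex intervalIntegral MeasureTheory

lemma norm_cexp_I_mul_ofReal_mul_ofReal (x y : ℝ) : ‖cexp (I * x * y)‖ = 1 := by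
  simpa [mul_assoc] using norm_exp_I_mul_ofReal (x * y)

lemma norm_cexp_I_mul_ofReal_mul_sq (t μ : ℝ) : ‖cexp (I * t * μ ^ 2)‖ = 1 := by
  rw [← ofReal_pow]; exact norm_cexp_I_mul_ofReal_mul_ofReal t (μ ^ 2)

lemma integral_inv_sq_of_pos {a b : ℝ} (ha : 0 < a) (hab : a ≤ b) :
    ∫ u in a..b, (u ^ 2)⁻¹ = a⁻¹ - b⁻¹ := by
  have hpos : ∀ u ∈ Set.uIcc a b, u ≠ 0 := fun u hu =>
    (ha.trans_le (Set.uIcc_of_le hab ▸ hu).1).ne'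
  rw [integral_eq_sub_of_hasDerivAt (f := fun u => -u⁻¹)
    (fun u hu => by simpa using (hasDerivAt_inv (hpos u hu)).fun_neg)
    (ContinuousOn.intervalIntegrable (u := fun u : ℝ => (u ^ 2)⁻¹)
      (ContinuousOn.inv₀ (by fun_prop) fun u hu => pow_ne_zero 2 (hpos u hu)))]
  ring

lemma hasDerivAt_cexp_I_mul_sq (t u : ℝ) :
    HasDerivAt (fun u : ℝ => cexp (I * t * u ^ 2)) (2 * I * t * u * cexp (I * t * u ^ 2)) u := by
  convert (((hasDerivAt_pow 2 (u : ℂ)).const_mul (I * t)).comp_ofReal).cexp using 1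
  ring

lemma norm_integral_inv_sq_mul_cexp_I_mul_sq_le {t a b : ℝ} (ha : 0 < a) (hab : a ≤ b) :
    ‖∫ u in a..b, ((u : ℂ) ^ 2)⁻¹ * cexp (I * t * u ^ 2)‖ ≤ a⁻¹ - b⁻¹ := by
  have hne : ∀ u ∈ Set.uIcc a b, u ^ 2 ≠ 0 := fun u hu =>
    pow_ne_zero 2 (ha.trans_le (Set.uIcc_of_le hab ▸ hu).1).ne'
  rw [← integral_inv_sq_of_pos ha hab]
  refine norm_integral_le_of_norm_le hab (ae_of_all _ fun u _ => le_of_eq ?_)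
    (ContinuousOn.intervalIntegrable (u := fun u : ℝ => (u ^ 2)⁻¹)
      (ContinuousOn.inv₀ (by fun_prop) hne))
  simp [norm_cexp_I_mul_ofReal_mul_sq]

lemma norm_integral_cexp_I_mul_sq_le_of_pos {t a b : ℝ} (ht : 0 < t) (ha : 0 < a) (hab : a ≤ b) :
    ‖∫ u in a..b, cexp (I * t * u ^ 2)‖ ≤ (t * a)⁻¹ := by
  have hne : ∀ u ∈ Set.uIcc a b, (u : ℂ) ≠ 0 := fun u hu =>
    ofReal_ne_zero.2 (ha.trans_le (Set.uIcc_of_le hab ▸ hu).1).ne'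
  set c : ℂ := 2 * I * t
  have hu : ∀ u ∈ Set.uIcc a b,
      HasDerivAt (fun u : ℝ => c⁻¹ * (u : ℂ)⁻¹) (-c⁻¹ * ((u : ℂ) ^ 2)⁻¹) u := fun u hu => by
    simpa using ((hasDerivAt_inv (hne u hu)).const_mul c⁻¹).comp_ofReal
  have hu' : ContinuousOn (fun u : ℝ => -c⁻¹ * ((u : ℂ) ^ 2)⁻¹) (Set.uIcc a b) :=
    continuousOn_const.mul (ContinuousOn.inv₀ (by fun_prop) fun u hu => pow_ne_zero 2 (hne u hu))
  -- integrate by parts against `cexp (I t u²) = (2 I t u)⁻¹ * (cexp (I t u²))'`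
  have ibp := integral_mul_deriv_eq_deriv_mul hu (fun u _ => hasDerivAt_cexp_I_mul_sq t u)
    hu'.intervalIntegrable (by apply Continuous.intervalIntegrable; fun_prop)
  have hc : c ≠ 0 := by simp [c, ht.ne']
  rw [integral_congr (g := fun u : ℝ => c⁻¹ * (u : ℂ)⁻¹ * (c * u * cexp (I * t * u ^ 2)))
    fun u hu => by field_simp [hne u hu], ibp]
  simp_rw [mul_assoc (-c⁻¹)]
  rw [intervalIntegral.integral_const_mul]
  have hnc : ‖c‖ = 2 * t := by simp [c, abs_of_pos ht]
  have hbdry : ∀ u : ℝ, 0 < u → ‖c⁻¹ * (u : ℂ)⁻¹ * cexp (I * t * u ^ 2)‖ = (2 * t * u)⁻¹ := by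
    intro u hu
    simp [norm_cexp_I_mul_ofReal_mul_sq, hnc, abs_of_pos hu, mul_comm]
  calc _ ≤ ‖c⁻¹ * (b : ℂ)⁻¹ * cexp (I * t * b ^ 2)‖ + ‖c⁻¹ * (a : ℂ)⁻¹ * cexp (I * t * a ^ 2)‖
        + ‖-c⁻¹‖ * ‖∫ u in a..b, ((u : ℂ) ^ 2)⁻¹ * cexp (I * t * u ^ 2)‖ := by
        rw [← norm_mul]
        exact (norm_sub_le _ _).trans (add_le_add_left (norm_sub_le _ _) _)
    _ ≤ (2 * t * b)⁻¹ + (2 * t * a)⁻¹ + (2 * t)⁻¹ * (a⁻¹ - b⁻¹) := by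
        rw [hbdry b (ha.trans_le hab), hbdry a ha, norm_neg, norm_inv, hnc]
        gcongr
        exact norm_integral_inv_sq_mul_cexp_I_mul_sq_le ha hab
    _ = (t * a)⁻¹ := by field_simp; ring

lemma intervalIntegrable_cexp_I_mul_sq (t a b : ℝ) :
    IntervalIntegrable (fun u : ℝ => cexp (I * t * u ^ 2)) volume a b :=
  (by fun_prop : Continuous fun u : ℝ => cexp (I * t * u ^ 2)).intervalIntegrable a b

lemma norm_integral_cexp_I_mul_sq_le_abs_sub {t a b : ℝ} :
    ‖∫ u in a..b, cexp (I * t * u ^ 2)‖ ≤ |b - a| := by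
  simpa using norm_integral_le_of_norm_le_const (C := 1) (a := a) (b := b)
    fun u _ => (norm_cexp_I_mul_ofReal_mul_sq t u).le

lemma norm_integral_zero_cexp_I_mul_sq_le_of_nonneg {t x : ℝ} (ht : 0 < t) (hx : 0 ≤ x) :
    ‖∫ u in (0 : ℝ)..x, cexp (I * t * u ^ 2)‖ ≤ 2 / √t := by
  set δ := (√t)⁻¹
  have hδ : 0 < δ := by positivity
  have h2δ : 2 / √t = δ + δ := by ring
  rw [h2δ]
  rcases le_total x δ with hxδ | hδx
  · refine norm_integral_cexp_I_mul_sq_le_abs_sub.trans ?_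
    rw [sub_zero, abs_of_nonneg hx]
    linarith
  have hnear : ‖∫ u in (0 : ℝ)..δ, cexp (I * t * u ^ 2)‖ ≤ δ := by
    simpa [abs_of_pos hδ] using norm_integral_cexp_I_mul_sq_le_abs_sub (t := t) (a := 0) (b := δ)
  -- beyond the stationary point `0` the tail bound applies, and `t * δ = √t = δ⁻¹`
  have htδ : (t * δ)⁻¹ = δ := by
    have : √t ≠ 0 := by positivity
    simp only [δ]
    field_simp
    rw [Real.sq_sqrt ht.le]
  have hfar := (norm_integral_cexp_I_mul_sq_le_of_pos ht hδ hδx).trans htδ.le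
  rw [← integral_add_adjacent_intervals (intervalIntegrable_cexp_I_mul_sq t 0 δ)
    (intervalIntegrable_cexp_I_mul_sq t δ x)]
  exact (norm_add_le _ _).trans (add_le_add hnear hfar)

lemma norm_integral_zero_cexp_I_mul_sq_le {t : ℝ} (ht : 0 < t) (x : ℝ) :
    ‖∫ u in (0 : ℝ)..x, cexp (I * t * u ^ 2)‖ ≤ 2 / √t := by
  rcases le_total 0 x with hx | hx
  · exact norm_integral_zero_cexp_I_mul_sq_le_of_nonneg ht hx
  have heven := integral_comp_neg (a := 0) (b := x) fun u : ℝ => cexp (I * t * u ^ 2)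
  simp only [ofReal_neg, neg_sq, neg_zero] at heven
  rw [heven, integral_symm, norm_neg]
  exact norm_integral_zero_cexp_I_mul_sq_le_of_nonneg ht (neg_nonneg.2 hx)

lemma norm_integral_cexp_I_mul_sq_le {t : ℝ} (ht : 0 < t) (a b : ℝ) :
    ‖∫ u in a..b, cexp (I * t * u ^ 2)‖ ≤ 4 / √t := by
  rw [← integral_interval_sub_left (intervalIntegrable_cexp_I_mul_sq t 0 b)
    (intervalIntegrable_cexp_I_mul_sq t 0 a)]
  calc _ ≤ 2 / √t + 2 / √t := (norm_sub_le _ _).trans <|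
        add_le_add (norm_integral_zero_cexp_I_mul_sq_le ht b)
          (norm_integral_zero_cexp_I_mul_sq_le ht a)
    _ = 4 / √t := by ring

lemma norm_integral_cexp_I_mul_sq_mul_cexp_le {t : ℝ} (ht : 0 < t) (c a b : ℝ) :
    ‖∫ μ in a..b, cexp (I * t * μ ^ 2) * cexp (I * μ * c)‖ ≤ 4 / √t := by
  have ht' : (t : ℂ) ≠ 0 := ofReal_ne_zero.2 ht.ne'
  -- complete the square: `t μ² + c μ = t (μ + c / 2t)² - c² / 4t`
  have hsq : ∀ μ : ℝ, cexp (I * t * μ ^ 2) * cexp (I * μ * c)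
      = cexp (I * ((-(c ^ 2 / (4 * t)) : ℝ) : ℂ))
        * cexp (I * t * ((μ + c / (2 * t) : ℝ) : ℂ) ^ 2) := by
    intro μ
    rw [← Complex.exp_add, ← Complex.exp_add]
    congr 1
    push_cast
    field_simp
    ring
  simp_rw [hsq]
  rw [intervalIntegral.integral_const_mul, norm_mul, norm_exp_I_mul_ofReal, one_mul,
    integral_comp_add_right (fun u : ℝ => cexp (I * t * u ^ 2))]
  exact norm_integral_cexp_I_mul_sq_le ht _ _

lemma norm_integral_cexp_I_mul_sq_mul_le_of_hasSum {t : ℝ} (ht : 0 < t) {a : ℕ → ℂ} {c : ℕ → ℝ}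
    {g : ℝ → ℂ} (ha : Summable fun n => ‖a n‖)
    (hg : ∀ μ : ℝ, HasSum (fun n => a n * cexp (I * μ * c n)) (g μ)) (α β : ℝ) :
    ‖∫ μ in α..β, cexp (I * t * μ ^ 2) * g μ‖ ≤ (∑' n, ‖a n‖) * (4 / √t) := by
  have hsum : HasSum (fun n => ∫ μ in α..β, cexp (I * t * μ ^ 2) * (a n * cexp (I * μ * c n)))
      (∫ μ in α..β, cexp (I * t * μ ^ 2) * g μ) :=
    hasSum_integral_of_dominated_convergence (fun n _ => ‖a n‖)
      (fun n => (by fun_prop : Continuous _).aestronglyMeasurable)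
      (fun n => ae_of_all _ fun μ _ => by
        simp [norm_cexp_I_mul_ofReal_mul_sq, norm_cexp_I_mul_ofReal_mul_ofReal])
      (ae_of_all _ fun _ _ => ha) intervalIntegrable_const
      (ae_of_all _ fun μ _ => (hg μ).mul_left _)
  refine hsum.norm_le_of_bounded (ha.hasSum.mul_right _) fun n => ?_
  simp_rw [mul_left_comm _ (a n)]
  rw [intervalIntegral.integral_const_mul, norm_mul]
  gcongr
  exact norm_integral_cexp_I_mul_sq_mul_cexp_le ht _ _ _

lemma norm_integral_cexp_I_mul_sq_mul_div_one_sub_le {t : ℝ} (ht : 0 < t) {r : ℂ} (hr : ‖r‖ < 1)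
    (c L α β : ℝ) :
    ‖∫ μ in α..β, cexp (I * t * μ ^ 2) * (cexp (I * μ * c) / (1 - r * cexp (I * μ * L)))‖
      ≤ (1 - ‖r‖)⁻¹ * (4 / √t) := by
  have hgeom : ∀ μ : ℝ, HasSum (fun n : ℕ => r ^ n * cexp (I * μ * ↑(c + n * L)))
      (cexp (I * μ * c) / (1 - r * cexp (I * μ * L))) := by
    intro μ
    have hlt : ‖r * cexp (I * μ * L)‖ < 1 := by
      simpa [norm_cexp_I_mul_ofReal_mul_ofReal] using hr
    have hterm : (fun n : ℕ => r ^ n * cexp (I * μ * ↑(c + n * L)))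
        = fun n : ℕ => cexp (I * μ * c) * (r * cexp (I * μ * L)) ^ n := by
      ext n
      rw [mul_pow, ← Complex.exp_nat_mul, mul_left_comm, ← Complex.exp_add]
      push_cast
      ring_nf
    rw [hterm, div_eq_mul_inv]
    exact (hasSum_geometric_of_norm_lt_one hlt).mul_left _
  have hnorm : ∑' n : ℕ, ‖r ^ n‖ = (1 - ‖r‖)⁻¹ := by
    simp_rw [norm_pow]
    exact tsum_geometric_of_lt_one (norm_nonneg r) hr
  rw [← hnorm]
  refine norm_integral_cexp_I_mul_sq_mul_le_of_hasSum ht ?_ hgeom α β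
  simpa [norm_pow] using summable_geometric_of_lt_one (norm_nonneg r) hr

lemma one_add_two_mul_div_sub_three_eq {z : ℂ} (hz : z ≠ 3) :
    1 + 2 * (z + 1) / (z - 3) = 1 / 3 - 8 / 9 * (z / (1 - 1 / 3 * z)) := by
  have h₁ : z - 3 ≠ 0 := sub_ne_zero.2 hz
  have h₂ : 1 - 1 / 3 * z ≠ 0 := fun h => h₁ (by linear_combination -3 * h)
  field_simp
  ring

theorem stmt_14_general (t : ℝ) (ht : 0 < t) (L d s : ℝ) (α β : ℝ) :
    ‖∫ μ in α..β,
        Complex.exp (I * t * μ ^ 2)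
          * (Complex.exp (I * μ * d)
              - (1 + 2 * (Complex.exp (I * μ * L) + 1) / (Complex.exp (I * μ * L) - 3))
                * Complex.exp (I * μ * s))‖
      ≤ 16 * Real.sqrt 2 / Real.sqrt t := by
  have hz3 : ∀ μ : ℝ, cexp (I * μ * L) ≠ 3 := fun μ h => by
    simpa [h] using norm_cexp_I_mul_ofReal_mul_ofReal μ L
  have hden : ∀ μ : ℝ, 1 - 1 / 3 * cexp (I * μ * L) ≠ 0 := fun μ h =>
    hz3 μ (by linear_combination -3 * h)
  have hsplit : ∀ μ : ℝ, cexp (I * t * μ ^ 2) * (cexp (I * μ * d)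
      - (1 + 2 * (cexp (I * μ * L) + 1) / (cexp (I * μ * L) - 3)) * cexp (I * μ * s))
      = cexp (I * t * μ ^ 2) * cexp (I * μ * d) - 1 / 3 * (cexp (I * t * μ ^ 2) * cexp (I * μ * s))
        + 8 / 9 * (cexp (I * t * μ ^ 2)
          * (cexp (I * μ * ↑(s + L)) / (1 - 1 / 3 * cexp (I * μ * L)))) := by
    intro μ
    rw [one_add_two_mul_div_sub_three_eq (hz3 μ), ofReal_add, mul_add, Complex.exp_add]
    ring
  have hint : ∀ f : ℝ → ℂ, Continuous f → IntervalIntegrable f volume α β :=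
    fun f hf => hf.intervalIntegrable _ _
  simp_rw [hsplit]
  rw [integral_add (hint _ (by fun_prop)) (hint _ (by fun_prop (disch := exact hden _))),
    integral_sub (hint _ (by fun_prop)) (hint _ (by fun_prop)),
    intervalIntegral.integral_const_mul, intervalIntegral.integral_const_mul]
  have hr : ‖(1 / 3 : ℂ)‖ < 1 := by norm_num
  calc _ ≤ 4 / √t + 1 / 3 * (4 / √t) + 8 / 9 * ((1 - 1 / 3)⁻¹ * (4 / √t)) := by
        refine (norm_add_le _ _).trans (add_le_add ((norm_sub_le _ _).trans (add_le_add ?_ ?_)) ?_)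
        · exact norm_integral_cexp_I_mul_sq_mul_cexp_le ht d α β
        · rw [norm_mul]
          gcongr
          · norm_num
          · exact norm_integral_cexp_I_mul_sq_mul_cexp_le ht s α β
        · rw [norm_mul]
          gcongr
          · norm_num
          · simpa using norm_integral_cexp_I_mul_sq_mul_div_one_sub_le ht hr (s + L) L α β
    _ = 32 / 3 / √t := by ring
    _ ≤ 16 * √2 / √t := by
        gcongr
        linarith [Real.one_lt_sqrt_two]

theorem stmt_14 (t : ℝ) (ht : 0 < t) (L d s : ℝ) (α β : ℝ) (hαβ : α ≤ β) :
    ‖∫ μ in α..β,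
        Complex.exp (I * t * μ ^ 2)
          * (Complex.exp (I * μ * d)
              - (1 + 2 * (Complex.exp (I * μ * L) + 1) / (Complex.exp (I * μ * L) - 3))
                * Complex.exp (I * μ * s))‖
      ≤ 16 * Real.sqrt 2 / Real.sqrt t :=
  stmt_14_general t ht L d s α β
end
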